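/- (Theorem 2, part (i)) Let S and S' be stabilizer subspaces of F_2^{2n} that are LC equivalent, i.e. Q S = S' for some Q ∈ C^l_n. Then for every r ≥ 1 and every family Ω of subsets ω^k, ω^{kl} ⊆ {1,…,n} (1 ≤ k < l ≤ r), the F_2-vector spaces V^Ω(S) and V^Ω(S') have the same dimension. -/
import Mathlib


/-- The field `F₂ = GF(2)`. -/
abbrev F2 : Type := ZMod 2

/-- `F₂^{2n}`: coordinate `i` of a vector corresponds to `Sum.inl i`
and coordinate `n + i` corresponds to `Sum.inr i`, for `i ∈ {1,…,n}`. -/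
abbrev V (n : ℕ) : Type := (Fin n ⊕ Fin n) → F2

/-- The support of `v ∈ F₂^{2n}`: the set of `i ∈ {1,…,n}`
with `(v_i, v_{n+i}) ≠ (0,0)`. -/
def supp {n : ℕ} (v : V n) : Finset (Fin n) :=
  Finset.univ.filter fun i => (v (Sum.inl i), v (Sum.inr i)) ≠ ((0 : F2), (0 : F2))

/-- Membership in the binary local Clifford group `C^l_n`: an invertible `2n × 2n`
matrix over `F₂` of block form `[[A,B],[C,D]]` with `A, B, C, D` diagonal. -/
def IsLocalClifford {n : ℕ} (Q : Matrix (Fin n ⊕ Fin n) (Fin n ⊕ Fin n) F2) : Prop :=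
  IsUnit Q ∧ ∃ A B C D : Fin n → F2,
    Q = Matrix.fromBlocks (Matrix.diagonal A) (Matrix.diagonal B)
      (Matrix.diagonal C) (Matrix.diagonal D)

/-- The symplectic inner product `⟨v,w⟩ = Σᵢ (vᵢ w_{n+i} + v_{n+i} wᵢ)` on `F₂^{2n}`. -/
def symp {n : ℕ} (v w : V n) : F2 :=
  ∑ i : Fin n, (v (Sum.inl i) * w (Sum.inr i) + v (Sum.inr i) * w (Sum.inl i))

/-- A stabilizer subspace: an `n`-dimensional subspace of `F₂^{2n}` which equals its
orthogonal complement with respect to the symplectic inner product. -/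
def IsStabilizer {n : ℕ} (S : Submodule F2 (V n)) : Prop :=
  Module.finrank F2 S = n ∧ ∀ w : V n, w ∈ S ↔ ∀ v ∈ S, symp v w = 0

/-- Local Clifford (LC) equivalence: `Q S = S'` for some `Q ∈ C^l_n`. -/
def LCequiv {n : ℕ} (S S' : Submodule F2 (V n)) : Prop :=
  ∃ Q : Matrix (Fin n ⊕ Fin n) (Fin n ⊕ Fin n) F2,
    IsLocalClifford Q ∧ S.map Q.mulVecLin = S'

/-- `T^Ω(S)`: the set of `r`-tuples `(v^1, …, v^r) ∈ S × ⋯ × S` with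
`supp(v^k) = ω^k` and `supp(v^k + v^l) = ω^{kl}` for `k < l`. -/
def Tset {n : ℕ} (r : ℕ) (S : Submodule F2 (V n))
    (ω : Fin r → Finset (Fin n)) (ωp : Fin r → Fin r → Finset (Fin n)) :
    Set (Fin r → V n) :=
  {v | (∀ k, v k ∈ S) ∧ (∀ k, supp (v k) = ω k) ∧
    ∀ k l, k < l → supp (v k + v l) = ωp k l}

/-- `V^Ω(S)`: the set of `r`-tuples `(v^1, …, v^r) ∈ S × ⋯ × S` with
`supp(v^k) ⊆ ω^k` and `supp(v^k + v^l) ⊆ ω^{kl}` for `k < l`. -/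
def Vset {n : ℕ} (r : ℕ) (S : Submodule F2 (V n))
    (ω : Fin r → Finset (Fin n)) (ωp : Fin r → Fin r → Finset (Fin n)) :
    Set (Fin r → V n) :=
  {v | (∀ k, v k ∈ S) ∧ (∀ k, supp (v k) ⊆ ω k) ∧
    ∀ k l, k < l → supp (v k + v l) ⊆ ωp k l}

open Matrix in
lemma supp_mulVec {n : ℕ} {Q : Matrix (Fin n ⊕ Fin n) (Fin n ⊕ Fin n) F2}
    (hQ : IsLocalClifford Q) (v : V n) : supp (Q *ᵥ v) = supp v := by
  obtain ⟨hU, A, B, C, D, rfl⟩ := hQ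
  set Q := fromBlocks (diagonal A) (diagonal B) (diagonal C) (diagonal D) with hQdef
  have h1 : ∀ (w : V n) (j : Fin n),
      (Q *ᵥ w) (Sum.inl j) = A j * w (Sum.inl j) + B j * w (Sum.inr j) := by
    intro w j
    simp [hQdef, fromBlocks_mulVec, mulVec_diagonal]
  have h2 : ∀ (w : V n) (j : Fin n),
      (Q *ᵥ w) (Sum.inr j) = C j * w (Sum.inl j) + D j * w (Sum.inr j) := by
    intro w j
    simp [hQdef, fromBlocks_mulVec, mulVec_diagonal]
  obtain ⟨inst⟩ := hU.nonempty_invertible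
  have hinj : Function.Injective (Q *ᵥ ·) := Q.mulVec_injective_of_invertible
  ext i
  simp only [supp, Finset.mem_filter, Finset.mem_univ, true_and, ne_eq, Prod.mk.injEq, not_and]
  constructor
  · intro h hv1 hv2
    exact h (by rw [h1, hv1, hv2]; ring) (by rw [h2, hv1, hv2]; ring)
  · intro h hq1 hq2
    set w : V n := Pi.single (Sum.inl i) (v (Sum.inl i)) + Pi.single (Sum.inr i) (v (Sum.inr i))
      with hwdef
    have hwl : ∀ j, w (Sum.inl j) = if j = i then v (Sum.inl i) else 0 := by
      intro j
      by_cases hj : j = i <;> simp [hwdef, Pi.single_apply, hj]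
    have hwr : ∀ j, w (Sum.inr j) = if j = i then v (Sum.inr i) else 0 := by
      intro j
      by_cases hj : j = i <;> simp [hwdef, Pi.single_apply, hj]
    have hw0 : Q *ᵥ w = 0 := by
      funext j
      cases j with
      | inl j =>
        rw [h1, hwl, hwr]
        by_cases hj : j = i
        · subst hj
          simp only [eq_self_iff_true, if_true]
          rw [← h1 v j, hq1]; rfl
        · simp [hj]
      | inr j =>
        rw [h2, hwl, hwr]
        by_cases hj : j = i
        · subst hj
          simp only [eq_self_iff_true, if_true]
          rw [← h2 v j, hq2]; rfl
        · simp [hj]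
    have : w = 0 := hinj (by simpa using hw0)
    have e1 : v (Sum.inl i) = 0 := by
      have := congrFun this (Sum.inl i); rwa [hwl, if_pos rfl] at this
    have e2 : v (Sum.inr i) = 0 := by
      have := congrFun this (Sum.inr i); rwa [hwr, if_pos rfl] at this
    exact h e1 e2

open Matrix

/-- Theorem 2, part (i): if the stabilizer subspaces `S, S'` are LC equivalent then for
every `r ≥ 1` and every family `Ω`, the subspaces `V^Ω(S)` and `V^Ω(S')` have the same
`F₂`-dimension. -/
theorem finrank_Vset_eq_of_LCequiv (n : ℕ) (hn : 1 ≤ n)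
    (S S' : Submodule F2 (V n)) (hS : IsStabilizer S) (hS' : IsStabilizer S')
    (hLC : LCequiv S S')
    (r : ℕ) (hr : 1 ≤ r)
    (ω : Fin r → Finset (Fin n)) (ωp : Fin r → Fin r → Finset (Fin n))
    (W W' : Submodule F2 (Fin r → V n))
    (hW : (W : Set (Fin r → V n)) = Vset r S ω ωp)
    (hW' : (W' : Set (Fin r → V n)) = Vset r S' ω ωp) :
    Module.finrank F2 W = Module.finrank F2 W' := by
  obtain ⟨Q, hQ, hmap⟩ := hLC
  obtain ⟨inst⟩ := hQ.1.nonempty_invertible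
  let f : V n ≃ₗ[F2] V n := Q.toLinearEquiv' inst
  let e : (Fin r → V n) ≃ₗ[F2] (Fin r → V n) := LinearEquiv.piCongrRight (fun _ => f)
  have he : ∀ (x : Fin r → V n) (k : Fin r), e x k = Q *ᵥ x k := fun x k => rfl
  have hmem : ∀ x : V n, x ∈ S ↔ Q *ᵥ x ∈ S' := by
    intro x
    rw [← hmap]
    constructor
    · intro hx; exact ⟨x, hx, rfl⟩
    · rintro ⟨y, hy, hxy⟩
      have : y = x := Q.mulVec_injective_of_invertible hxy
      rwa [← this]
  have himg : (⇑e) '' (Vset r S ω ωp) = Vset r S' ω ωp := by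
    ext y
    constructor
    · rintro ⟨x, ⟨hx1, hx2, hx3⟩, rfl⟩
      refine ⟨fun k => ?_, fun k => ?_, fun k l hkl => ?_⟩
      · rw [he]; exact (hmem _).1 (hx1 k)
      · rw [he, supp_mulVec hQ]; exact hx2 k
      · rw [he, he, ← Matrix.mulVec_add, supp_mulVec hQ]; exact hx3 k l hkl
    · rintro ⟨hy1, hy2, hy3⟩
      refine ⟨e.symm y, ?_, e.apply_symm_apply y⟩
      have hyk : ∀ k, Q *ᵥ (e.symm y k) = y k := by
        intro k; rw [← he]; rw [e.apply_symm_apply]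
      refine ⟨fun k => (hmem _).2 (by rw [hyk k]; exact hy1 k), fun k => ?_, fun k l hkl => ?_⟩
      · rw [← supp_mulVec hQ, hyk k]; exact hy2 k
      · rw [← supp_mulVec hQ (e.symm y k + e.symm y l), Matrix.mulVec_add, hyk k, hyk l]
        exact hy3 k l hkl
  have key : Submodule.map (e : (Fin r → V n) →ₗ[F2] (Fin r → V n)) W = W' := by
    apply SetLike.coe_injective
    simp only [Submodule.map_coe, LinearEquiv.coe_coe, hW, hW']; exact himg
  rw [← key, LinearEquiv.finrank_map_eq]
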